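/- arXiv:2102.11193 — 3 statements merged into one kernel-verified Lean document; each statement's English description precedes it below -/
import Mathlib

section
/- Consider the LTI system x(t+1) = A x(t) + B u(t) with A ∈ ℝ^{n×n}, B ∈ ℝ^{n×m}, (A,B) controllable. Let t ≥ 1 and let x(0),...,x(t) and u(0),...,u(t−1) be an input/state trajectory (x(k+1) = A x(k) + B u(k) for 0 ≤ k ≤ t−1). Suppose x(t) ∈ span{x(0),...,x(t−1)} and that the left kernel of the stacked matrix whose columns are (x(k), u(k)), k = 0,...,t−1, equals (left kernel of [x(0) ... x(t−1)]) × {0_m}. Then span{x(0),...,x(t−1)} = ℝ^n and the stacked matrix has full row rank n+m, hence t ≥ n+m. -/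
open Matrix

/-- If x(t) ∈ span{x(0),…,x(t−1)} and the left kernel of the input/state data matrix equals
(left kernel of the state data matrix) × {0}, then (by controllability) the states span ℝ^n,
the data matrix has full row rank n+m, and hence t ≥ n+m. -/
theorem stmt6 {n m : ℕ} (A : Matrix (Fin n) (Fin n) ℝ) (B : Matrix (Fin n) (Fin m) ℝ)
    (hctrb : (⨆ i : Fin n, LinearMap.range ((A ^ (i : ℕ) * B).mulVecLin)) = ⊤)
    (t : ℕ) (ht : 1 ≤ t)
    (x : ℕ → Fin n → ℝ) (u : ℕ → Fin m → ℝ)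
    (htraj : ∀ k < t, x (k + 1) = A.mulVec (x k) + B.mulVec (u k))
    (hspan : x t ∈ Submodule.span ℝ (Set.range fun k : Fin t => x k))
    (hker : ∀ v : Fin n ⊕ Fin m → ℝ,
      v ᵥ* Matrix.of (fun i (s : Fin t) => Sum.elim (x (s : ℕ)) (u (s : ℕ)) i) = 0 ↔
      ((v ∘ Sum.inl) ᵥ* Matrix.of (fun i (s : Fin t) => x (s : ℕ) i) = 0 ∧ v ∘ Sum.inr = 0)) :
    Submodule.span ℝ (Set.range fun k : Fin t => x k) = ⊤ ∧
    (Matrix.of (fun i (s : Fin t) => Sum.elim (x (s : ℕ)) (u (s : ℕ)) i)).rank = n + m ∧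
    n + m ≤ t := by
  set X : Matrix (Fin n) (Fin t) ℝ := Matrix.of (fun i (s : Fin t) => x (s : ℕ) i) with hXdef
  set M : Matrix (Fin n ⊕ Fin m) (Fin t) ℝ :=
    Matrix.of (fun i (s : Fin t) => Sum.elim (x (s : ℕ)) (u (s : ℕ)) i) with hMdef
  -- one-step propagation lemma
  have step : ∀ w : Fin n → ℝ, w ᵥ* X = 0 → (w ᵥ* A) ᵥ* X = 0 ∧ w ᵥ* B = 0 := by
    intro w hw
    have hdot : ∀ s : Fin t, w ⬝ᵥ x (s : ℕ) = 0 := by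
      intro s
      have := congrFun hw s
      simpa [vecMul, dotProduct, hXdef] using this
    have hxt : w ⬝ᵥ x t = 0 := by
      refine Submodule.span_induction (p := fun y _ => w ⬝ᵥ y = 0) ?_ ?_ ?_ ?_ hspan
      · rintro y ⟨k, rfl⟩; exact hdot k
      · simp
      · intro a b _ _ ha hb; rw [dotProduct_add, ha, hb, add_zero]
      · intro c a _ ha; rw [dotProduct_smul, ha, smul_zero]
    have hMker : (Sum.elim (w ᵥ* A) (w ᵥ* B)) ᵥ* M = 0 := by
      funext s
      have hcomp : ((Sum.elim (w ᵥ* A) (w ᵥ* B)) ᵥ* M) s = w ⬝ᵥ x ((s : ℕ) + 1) := by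
        have := htraj s s.2
        rw [this, dotProduct_add, Matrix.dotProduct_mulVec, Matrix.dotProduct_mulVec]
        simp only [vecMul, hMdef, dotProduct, Fintype.sum_sum_type, Matrix.of_apply,
          Sum.elim_inl, Sum.elim_inr]
      rw [hcomp, Pi.zero_apply]
      rcases lt_or_eq_of_le (Nat.succ_le_of_lt s.2) with h | h
      · exact hdot ⟨(s : ℕ) + 1, h⟩
      · rw [show (s : ℕ) + 1 = t from h]; exact hxt
    have h2 := (hker _).mp hMker
    constructor
    · have h := h2.1
      have : (Sum.elim (w ᵥ* A) (w ᵥ* B) ∘ Sum.inl) = w ᵥ* A := by funext i; simp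
      rwa [this] at h
    · have h := h2.2
      have : (Sum.elim (w ᵥ* A) (w ᵥ* B) ∘ Sum.inr) = w ᵥ* B := by funext i; simp
      rwa [this] at h
  -- left kernel of X is trivial
  have key : ∀ v : Fin n → ℝ, v ᵥ* X = 0 → v = 0 := by
    intro v hv
    have pow : ∀ i : ℕ, (v ᵥ* (A ^ i)) ᵥ* X = 0 := by
      intro i
      induction i with
      | zero => simpa using hv
      | succ i ih =>
        have := (step _ ih).1
        rwa [pow_succ, ← Matrix.vecMul_vecMul]
    have hB : ∀ i : ℕ, v ᵥ* (A ^ i * B) = 0 := by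
      intro i
      rw [← Matrix.vecMul_vecMul]
      exact (step _ (pow i)).2
    -- linear functional y ↦ v ⬝ᵥ y
    let f : (Fin n → ℝ) →ₗ[ℝ] ℝ :=
      { toFun := fun y => v ⬝ᵥ y
        map_add' := fun a b => dotProduct_add v a b
        map_smul' := fun c a => by simp [dotProduct_smul] }
    have hle : (⨆ i : Fin n, LinearMap.range ((A ^ (i : ℕ) * B).mulVecLin)) ≤ LinearMap.ker f := by
      refine iSup_le fun i => ?_
      rintro y ⟨c, rfl⟩
      simp only [LinearMap.mem_ker]
      show v ⬝ᵥ ((A ^ (i : ℕ) * B) *ᵥ c) = 0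
      rw [Matrix.dotProduct_mulVec, hB, zero_dotProduct]
    rw [hctrb] at hle
    have : f v = 0 := hle Submodule.mem_top
    have : v ⬝ᵥ v = 0 := this
    exact dotProduct_self_eq_zero.mp this
  -- left kernel of M is trivial
  have keyM : ∀ w : Fin n ⊕ Fin m → ℝ, w ᵥ* M = 0 → w = 0 := by
    intro w hw
    obtain ⟨h1, h2⟩ := (hker w).mp hw
    have h1' : w ∘ Sum.inl = 0 := key _ h1
    funext i
    cases i with
    | inl i => exact congrFun h1' i
    | inr i => exact congrFun h2 i
  -- rank computations
  have hrankX : X.rank = n := by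
    have hker' : LinearMap.ker (Xᵀ.mulVecLin) = ⊥ := by
      rw [LinearMap.ker_eq_bot']
      intro v hv
      exact key v (by simpa [Matrix.mulVecLin_apply, Matrix.mulVec_transpose] using hv)
    have := LinearMap.finrank_range_add_finrank_ker (Xᵀ.mulVecLin)
    rw [hker', finrank_bot, add_zero] at this
    have hXT : Xᵀ.rank = n := by
      rw [Matrix.rank, this]
      simp [Module.finrank_pi]
    rw [← Matrix.rank_transpose, hXT]
  have hrankM : M.rank = n + m := by
    have hker' : LinearMap.ker (Mᵀ.mulVecLin) = ⊥ := by
      rw [LinearMap.ker_eq_bot']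
      intro w hw
      exact keyM w (by simpa [Matrix.mulVecLin_apply, Matrix.mulVec_transpose] using hw)
    have := LinearMap.finrank_range_add_finrank_ker (Mᵀ.mulVecLin)
    rw [hker', finrank_bot, add_zero] at this
    have hMT : Mᵀ.rank = n + m := by
      rw [Matrix.rank, this]
      simp [Module.finrank_pi]
    rw [← Matrix.rank_transpose, hMT]
  have hspan_top : Submodule.span ℝ (Set.range fun k : Fin t => x (k : ℕ)) = ⊤ := by
    have hr : Submodule.span ℝ (Set.range Xᵀ) = LinearMap.range X.mulVecLin :=
      (Matrix.range_mulVecLin X).symm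
    have hrange : Set.range Xᵀ = Set.range fun k : Fin t => x (k : ℕ) := by
      congr 1
    have htop : LinearMap.range X.mulVecLin = ⊤ := by
      apply Submodule.eq_top_of_finrank_eq
      have : Module.finrank ℝ (LinearMap.range X.mulVecLin) = X.rank := rfl
      rw [this, hrankX]
      simp [Module.finrank_pi]
    rw [← hrange, hr, htop]
  refine ⟨hspan_top, hrankM, ?_⟩
  have := M.rank_le_card_width
  rw [hrankM, Fintype.card_fin] at this
  exact this
end

section
/- Consider x(t+1) = A x(t) + B u(t) with (A,B) controllable, A ∈ ℝ^{n×n}, B ∈ ℝ^{n×m}. Let 1 ≤ t ≤ n+m−1 and let x(0),...,x(t), u(0),...,u(t−1) be a trajectory with x(t) ∈ span{x(0),...,x(t−1)}. Then there exist ξ ∈ ℝ^n and η ∈ ℝ^m with η ≠ 0 such that ξᵀx(k) + ηᵀu(k) = 0 for all k = 0,...,t−1. -/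
open Matrix

/-- If 1 ≤ t ≤ n+m−1, (A,B) is controllable and x(t) ∈ span{x(0),…,x(t−1)}, then there is a
left-kernel vector (ξ, η) of the input/state data matrix with η ≠ 0. -/
theorem stmt7 {n m : ℕ} (A : Matrix (Fin n) (Fin n) ℝ) (B : Matrix (Fin n) (Fin m) ℝ)
    (hctrb : (⨆ i : Fin n, LinearMap.range ((A ^ (i : ℕ) * B).mulVecLin)) = ⊤)
    (t : ℕ) (ht1 : 1 ≤ t) (ht2 : t ≤ n + m - 1)
    (x : ℕ → Fin n → ℝ) (u : ℕ → Fin m → ℝ)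
    (htraj : ∀ k < t, x (k + 1) = A.mulVec (x k) + B.mulVec (u k))
    (hspan : x t ∈ Submodule.span ℝ (Set.range fun k : Fin t => x k)) :
    ∃ (ξ : Fin n → ℝ) (η : Fin m → ℝ), η ≠ 0 ∧
      ∀ k < t, ξ ⬝ᵥ x k + η ⬝ᵥ u k = 0 := by
  classical
  set W : Submodule ℝ ((Fin n → ℝ) × (Fin m → ℝ)) :=
    Submodule.span ℝ (Set.range fun k : Fin t => (x k, u k)) with hW
  by_cases hc : ∀ b : Fin m → ℝ, ((0 : Fin n → ℝ), b) ∈ W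
  · -- derive a contradiction
    exfalso
    set V : Submodule ℝ (Fin n → ℝ) :=
      Submodule.span ℝ (Set.range fun k : Fin t => x k) with hV
    have hxuW : ∀ k : Fin t, ((x k, u k) : (Fin n → ℝ) × (Fin m → ℝ)) ∈ W :=
      fun k => Submodule.subset_span ⟨k, rfl⟩
    have hx0W : ∀ k : Fin t, ((x k, (0 : Fin m → ℝ)) : (Fin n → ℝ) × (Fin m → ℝ)) ∈ W := by
      intro k
      have h := W.sub_mem (hxuW k) (hc (u k))
      simpa using h
    have hxV : ∀ k : Fin t, x (↑k + 1) ∈ V := by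
      intro k
      rcases lt_or_eq_of_le (Nat.succ_le_of_lt k.2) with h | h
      · exact Submodule.subset_span ⟨⟨k + 1, h⟩, rfl⟩
      · rw [show (k:ℕ)+1 = t from h]; exact hspan
    let L : ((Fin n → ℝ) × (Fin m → ℝ)) →ₗ[ℝ] (Fin n → ℝ) :=
      A.mulVecLin.comp (LinearMap.fst ℝ _ _) + B.mulVecLin.comp (LinearMap.snd ℝ _ _)
    have hLapp : ∀ (a : Fin n → ℝ) (b : Fin m → ℝ),
        L (a, b) = A.mulVec a + B.mulVec b := fun a b => rfl
    have hmap : W.map L ≤ V := by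
      rw [hW, Submodule.map_span, Submodule.span_le]
      rintro _ ⟨_, ⟨k, rfl⟩, rfl⟩
      show L (x k, u k) ∈ V
      have hLk : L (x (k : ℕ), u (k : ℕ)) = x (↑k + 1) := by
        rw [hLapp, htraj k k.2]
      rw [hLk]
      exact hxV k
    have hinl : ∀ a ∈ V, ((a, (0 : Fin m → ℝ)) : (Fin n → ℝ) × (Fin m → ℝ)) ∈ W := by
      intro a ha
      have hle : V.map (LinearMap.inl ℝ (Fin n → ℝ) (Fin m → ℝ)) ≤ W := by
        rw [hV, Submodule.map_span, Submodule.span_le]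
        rintro _ ⟨_, ⟨k, rfl⟩, rfl⟩
        exact hx0W k
      exact hle ⟨a, ha, rfl⟩
    have hB : ∀ b : Fin m → ℝ, B.mulVec b ∈ V := by
      intro b
      have h := hmap ⟨(0, b), hc b, rfl⟩
      rw [hLapp] at h
      simpa using h
    have hA : ∀ a ∈ V, A.mulVec a ∈ V := by
      intro a ha
      have h := hmap ⟨(a, 0), hinl a ha, rfl⟩
      rw [hLapp] at h
      simpa using h
    have hpow : ∀ (j : ℕ) (v : Fin m → ℝ), (A ^ j * B).mulVec v ∈ V := by
      intro j
      induction j with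
      | zero => intro v; simpa using hB v
      | succ j ih =>
        intro v
        have : A ^ (j + 1) * B = A * (A ^ j * B) := by
          rw [pow_succ', Matrix.mul_assoc]
        rw [this, ← mulVec_mulVec]
        exact hA _ (ih v)
    have hVtop : V = ⊤ := by
      refine top_unique ?_
      rw [← hctrb]
      refine iSup_le fun i => ?_
      rintro _ ⟨v, rfl⟩
      exact hpow _ v
    have hWtop : W = ⊤ := by
      rw [eq_top_iff]
      rintro ⟨a, b⟩ -
      have h1 : ((a, (0 : Fin m → ℝ)) : (Fin n → ℝ) × (Fin m → ℝ)) ∈ W :=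
        hinl a (hVtop ▸ Submodule.mem_top)
      have h2 := hc b
      have h := W.add_mem h1 h2
      simpa using h
    have hfr : Module.finrank ℝ ((Fin n → ℝ) × (Fin m → ℝ)) ≤ Fintype.card (Fin t) :=
      finrank_le_of_span_eq_top hWtop
    rw [Module.finrank_prod, Module.finrank_pi, Module.finrank_pi, Fintype.card_fin,
      Fintype.card_fin, Fintype.card_fin] at hfr
    omega
  · push_neg at hc
    obtain ⟨b, hb⟩ := hc
    obtain ⟨φ, hφb, hφW⟩ := Submodule.exists_dual_map_eq_bot_of_notMem hb inferInstance
    have hφ0 : ∀ w ∈ W, φ w = 0 := by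
      intro w hw
      have : φ w ∈ W.map φ := ⟨w, hw, rfl⟩
      rw [hφW] at this
      simpa using this
    set ξ : Fin n → ℝ := fun i => φ ((fun j => if i = j then 1 else 0), 0) with hξ
    set η : Fin m → ℝ := fun i => φ (0, (fun j => if i = j then 1 else 0)) with hη
    have key : ∀ (a : Fin n → ℝ) (c : Fin m → ℝ), φ (a, c) = ξ ⬝ᵥ a + η ⬝ᵥ c := by
      intro a c
      have hsplit : φ (a, c) = φ (a, 0) + φ (0, c) := by
        rw [← map_add]
        simp
      have h1 := LinearMap.pi_apply_eq_sum_univ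
        (φ.comp (LinearMap.inl ℝ (Fin n → ℝ) (Fin m → ℝ))) a
      have h2 := LinearMap.pi_apply_eq_sum_univ
        (φ.comp (LinearMap.inr ℝ (Fin n → ℝ) (Fin m → ℝ))) c
      simp only [LinearMap.comp_apply, LinearMap.inl_apply, LinearMap.inr_apply] at h1 h2
      rw [hsplit, h1, h2, hξ, hη]
      simp [dotProduct, mul_comm, smul_eq_mul]
    refine ⟨ξ, η, ?_, ?_⟩
    · intro h
      apply hφb
      have := key 0 b
      rw [h] at this
      simpa using this
    · intro k hk
      have hmem : ((x k, u k) : (Fin n → ℝ) × (Fin m → ℝ)) ∈ W :=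
        Submodule.subset_span ⟨⟨k, hk⟩, rfl⟩
      have := hφ0 _ hmem
      rw [key] at this
      exact this
end

section
/- If rank [H_{L−1}(y_{[0,T−2]}); H_L(u_{[0,T−1]})] = n+mL for a trajectory of the minimal system, then rank [H_L(y_{[0,T−1]}); H_L(u_{[0,T−1]})] = n+mL as well, i.e., appending the last block row of outputs does not change the rank. -/
open Matrix

/-- Stacked input/output Hankel matrix [H_dy(y); H_du(u)] with c columns. -/
noncomputable def stackedHankelYU {p m : ℕ} (y : ℕ → Fin p → ℝ) (u : ℕ → Fin m → ℝ)
    (dy du c : ℕ) : Matrix ((Fin dy × Fin p) ⊕ (Fin du × Fin m)) (Fin c) ℝ :=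
  Matrix.of fun i s =>
    match i with
    | Sum.inl (r, q) => y ((s : ℕ) + (r : ℕ)) q
    | Sum.inr (r, j) => u ((s : ℕ) + (r : ℕ)) j

/-- Depth-i observability matrix [C; CA; …; CA^{i−1}]. -/
noncomputable def obsMat {n p : ℕ} (A : Matrix (Fin n) (Fin n) ℝ)
    (C : Matrix (Fin p) (Fin n) ℝ) (i : ℕ) : Matrix (Fin i × Fin p) (Fin n) ℝ :=
  Matrix.of fun rq j => (C * A ^ (rq.1 : ℕ)) rq.2 j

/-- Taking a subset of rows reduces the rank (non-square version). -/
lemma rank_rowselect_le {α β γ : Type*} [Fintype α] [Fintype β] [Fintype γ]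
    (f : β → α) (M : Matrix α γ ℝ) :
    (M.submatrix f _root_.id).rank ≤ M.rank := by
  have h : M.submatrix f _root_.id = M.submatrix f ⇑(Equiv.refl γ) := rfl
  rw [Matrix.rank, Matrix.rank, h, Matrix.mulVecLin_submatrix,
    LinearMap.range_comp, LinearMap.range_comp]
  have h2 : LinearMap.range (LinearMap.funLeft ℝ ℝ ⇑(Equiv.refl γ).symm) = ⊤ :=
    LinearMap.range_eq_top.2 fun v => ⟨v, rfl⟩
  rw [h2, Submodule.map_top]
  exact Submodule.finrank_map_le _ _

lemma mulVec_sum' {α a b : Type*} [Fintype b] (t : Finset α) (M : Matrix a b ℝ)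
    (f : α → b → ℝ) : M.mulVec (∑ k ∈ t, f k) = ∑ k ∈ t, M.mulVec (f k) := by
  ext i
  simp only [Matrix.mulVec, dotProduct, Finset.sum_apply, Finset.mul_sum]
  rw [Finset.sum_comm]

lemma sum_fin_ite {L : ℕ} (r : Fin L) (a : ℕ → ℝ) (b : ℝ) :
    (∑ k : Fin L, if (k : ℕ) < (r : ℕ) then a k else if (k : ℕ) = (r : ℕ) then b else 0)
    = (∑ k ∈ Finset.range (r : ℕ), a k) + b := by
  rw [Fin.sum_univ_eq_sum_range (fun k => if k < (r : ℕ) then a k else if k = (r : ℕ) then b else 0)]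
  have hr : (r : ℕ) + 1 ≤ L := r.isLt
  rw [← Finset.sum_subset (Finset.range_subset_range.2 hr) (by
    intro k _ hk
    rw [Finset.mem_range, not_lt] at hk
    have h1 : ¬ k < (r : ℕ) := by omega
    have h2 : ¬ k = (r : ℕ) := by omega
    simp [h1, h2])]
  rw [Finset.sum_range_succ]
  congr 1
  · refine Finset.sum_congr rfl fun k hk => ?_
    rw [Finset.mem_range] at hk
    simp [hk]
  · simp

/-- For a minimal system with lag ℓ and L > ℓ: if
rank [H_{L−1}(y_{[0,T−2]}); H_L(u_{[0,T−1]})] = n + mL, then also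
rank [H_L(y_{[0,T−1]}); H_L(u_{[0,T−1]})] = n + mL. -/
theorem stmt17 {n m p : ℕ} (A : Matrix (Fin n) (Fin n) ℝ) (B : Matrix (Fin n) (Fin m) ℝ)
    (C : Matrix (Fin p) (Fin n) ℝ) (D : Matrix (Fin p) (Fin m) ℝ)
    (hctrb : (⨆ i : Fin n, LinearMap.range ((A ^ (i : ℕ) * B).mulVecLin)) = ⊤)
    (ℓ : ℕ) (hlag : (obsMat A C ℓ).rank = n ∧ ∀ i < ℓ, (obsMat A C i).rank ≠ n)
    (L T : ℕ) (hL : ℓ < L) (hLT : L ≤ T)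
    (x : ℕ → Fin n → ℝ) (u : ℕ → Fin m → ℝ) (y : ℕ → Fin p → ℝ)
    (htraj : ∀ s, x (s + 1) = A.mulVec (x s) + B.mulVec (u s))
    (hout : ∀ s, y s = C.mulVec (x s) + D.mulVec (u s))
    (hrank : (stackedHankelYU y u (L - 1) L (T - L + 1)).rank = n + m * L) :
    (stackedHankelYU y u L L (T - L + 1)).rank = n + m * L := by
  set c := T - L + 1 with hc
  -- state evolution formula
  have hstate : ∀ s r, x (s + r) = (A ^ r).mulVec (x s) +
      ∑ k ∈ Finset.range r, (A ^ (r - 1 - k) * B).mulVec (u (s + k)) := by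
    intro s r
    induction r with
    | zero => simp [Matrix.one_mulVec]
    | succ r ih =>
      have h1 : s + (r + 1) = (s + r) + 1 := by omega
      rw [h1, htraj, ih, Finset.sum_range_succ, Matrix.mulVec_add]
      rw [show ((A ^ (r + 1)).mulVec (x s) +
          ((∑ k ∈ Finset.range r, (A ^ (r + 1 - 1 - k) * B).mulVec (u (s + k))) +
            (A ^ (r + 1 - 1 - r) * B).mulVec (u (s + r)))) =
          ((A ^ (r + 1)).mulVec (x s) +
          ∑ k ∈ Finset.range r, (A ^ (r + 1 - 1 - k) * B).mulVec (u (s + k))) +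
            (A ^ (r + 1 - 1 - r) * B).mulVec (u (s + r)) from by abel]
      congr 1
      · congr 1
        · rw [Matrix.mulVec_mulVec, ← pow_succ']
        · rw [mulVec_sum']
          refine Finset.sum_congr rfl fun k hk => ?_
          rw [Finset.mem_range] at hk
          rw [Matrix.mulVec_mulVec, ← Matrix.mul_assoc,
            show r + 1 - 1 - k = (r - 1 - k) + 1 from by omega, pow_succ']
      · simp
  -- output formula
  have houtf : ∀ s r, y (s + r) = ((C * A ^ r).mulVec (x s) +
      ∑ k ∈ Finset.range r, (C * (A ^ (r - 1 - k) * B)).mulVec (u (s + k))) +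
      D.mulVec (u (s + r)) := by
    intro s r
    rw [hout, hstate s r, Matrix.mulVec_add, mulVec_sum', Matrix.mulVec_mulVec]
    congr 2
    refine Finset.sum_congr rfl fun k _ => ?_
    rw [Matrix.mulVec_mulVec]
  -- factorization of the big matrix
  set M : Matrix ((Fin L × Fin p) ⊕ (Fin L × Fin m)) (Fin n ⊕ (Fin L × Fin m)) ℝ :=
    Matrix.of fun i j =>
      match i, j with
      | Sum.inl (r, q), Sum.inl j => (C * A ^ (r : ℕ)) q j
      | Sum.inl (r, q), Sum.inr (k, j) =>
          if (k : ℕ) < (r : ℕ) then (C * (A ^ ((r : ℕ) - 1 - (k : ℕ)) * B)) q j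
          else if (k : ℕ) = (r : ℕ) then D q j else 0
      | Sum.inr _, Sum.inl _ => 0
      | Sum.inr (r, j), Sum.inr (k, j') => if r = k ∧ j = j' then 1 else 0
      with hM
  set N : Matrix (Fin n ⊕ (Fin L × Fin m)) (Fin c) ℝ := Matrix.of fun j s =>
    match j with
    | Sum.inl j => x (s : ℕ) j
    | Sum.inr (k, j) => u ((s : ℕ) + (k : ℕ)) j
    with hN
  have hfact : stackedHankelYU y u L L c = M * N := by
    ext i s
    match i with
    | Sum.inl (r, q) =>
      show y ((s : ℕ) + (r : ℕ)) q = _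
      rw [Matrix.mul_apply, Fintype.sum_sum_type]
      have h1 : (∑ j : Fin n, M (Sum.inl (r, q)) (Sum.inl j) * N (Sum.inl j) s)
          = (C * A ^ (r : ℕ)).mulVec (x (s : ℕ)) q := by
        simp [hM, hN, Matrix.mulVec, dotProduct]
      have h2 : (∑ kj : Fin L × Fin m, M (Sum.inl (r, q)) (Sum.inr kj) * N (Sum.inr kj) s)
          = (∑ k ∈ Finset.range (r : ℕ),
              (C * (A ^ ((r : ℕ) - 1 - k) * B)).mulVec (u ((s : ℕ) + k)) q)
            + D.mulVec (u ((s : ℕ) + (r : ℕ))) q := by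
        rw [Fintype.sum_prod_type]
        rw [show (∑ k : Fin L, ∑ j : Fin m,
            M (Sum.inl (r, q)) (Sum.inr (k, j)) * N (Sum.inr (k, j)) s)
            = ∑ k : Fin L, (if (k : ℕ) < (r : ℕ) then
                (C * (A ^ ((r : ℕ) - 1 - (k : ℕ)) * B)).mulVec (u ((s : ℕ) + (k : ℕ))) q
              else if (k : ℕ) = (r : ℕ) then
                D.mulVec (u ((s : ℕ) + (r : ℕ))) q else 0) from ?_]
        · exact sum_fin_ite r
            (fun k => (C * (A ^ ((r : ℕ) - 1 - k) * B)).mulVec (u ((s : ℕ) + k)) q) _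
        · refine Finset.sum_congr rfl fun k _ => ?_
          have hMe : ∀ j : Fin m, M (Sum.inl (r, q)) (Sum.inr (k, j))
              = if (k : ℕ) < (r : ℕ) then (C * (A ^ ((r : ℕ) - 1 - (k : ℕ)) * B)) q j
                else if (k : ℕ) = (r : ℕ) then D q j else 0 := fun j => by
            rw [hM]; rfl
          have hNe : ∀ j : Fin m, N (Sum.inr (k, j)) s = u ((s : ℕ) + (k : ℕ)) j := fun j => by
            rw [hN]; rfl
          simp only [hMe, hNe]
          split_ifs with hkr hke
          · simp [Matrix.mulVec, dotProduct]
          · rw [hke]; simp [Matrix.mulVec, dotProduct]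
          · simp
      rw [h1, h2, houtf]
      rw [Pi.add_apply, Pi.add_apply, Finset.sum_apply]
      ring
    | Sum.inr (r, j) =>
      show u ((s : ℕ) + (r : ℕ)) j = _
      rw [Matrix.mul_apply, Fintype.sum_sum_type]
      simp [hM, hN, Fintype.sum_prod_type, ite_and, Finset.sum_ite_eq]
  -- upper bound
  have hub : (stackedHankelYU y u L L c).rank ≤ n + m * L := by
    rw [hfact]
    calc (M * N).rank ≤ M.rank := Matrix.rank_mul_le_left M N
      _ ≤ Fintype.card (Fin n ⊕ (Fin L × Fin m)) := Matrix.rank_le_card_width M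
      _ = n + m * L := by simp [mul_comm]
  -- lower bound: the small matrix is a row selection of the big one
  have hlb : n + m * L ≤ (stackedHankelYU y u L L c).rank := by
    have hLL : L - 1 ≤ L := Nat.sub_le _ _
    set f : ((Fin (L - 1) × Fin p) ⊕ (Fin L × Fin m)) → ((Fin L × Fin p) ⊕ (Fin L × Fin m)) :=
      fun i => match i with
      | Sum.inl (r, q) => Sum.inl (Fin.castLE hLL r, q)
      | Sum.inr z => Sum.inr z
    have hsub : stackedHankelYU y u (L - 1) L c
        = (stackedHankelYU y u L L c).submatrix f _root_.id := by
      ext i s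
      match i with
      | Sum.inl (r, q) => rfl
      | Sum.inr (r, j) => rfl
    rw [← hrank, hsub]
    exact rank_rowselect_le f _
  omega
end
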